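/- Let G be a finite rooted DAG with root r and let v ∈ V(G) be a non-leaf vertex, and set m := awt(G_v). Then there exists a vertex a ∈ V(G_v) such that awt(G_v^a) ≤ m/2 and awt(G_v^b) > m/2 for every out-neighbour b ∈ N⁺(a). -/

import Mathlib

/-- The set of directed paths from `r` to `v` in the digraph with edge relation `E`,
represented as nonempty vertex lists. -/
def pathsFromTo {V : Type} (E : V → V → Prop) (r v : V) : Set (List V) :=
  {p : List V | p.Chain' E ∧ p.head? = some r ∧ p.getLast? = some v}

/-- The weight `wt_G(v)`: the number of directed paths from the root `r` to `v`. -/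
noncomputable def pathWt {V : Type} (E : V → V → Prop) (r v : V) : ℕ :=
  Set.ncard (pathsFromTo E r v)

/-- The aggregate weight `awt(G) = Σ_{v ∈ V(G)} wt_G(v)`. -/
noncomputable def awt {V : Type} [Fintype V] (E : V → V → Prop) (r : V) : ℕ :=
  ∑ v : V, pathWt E r v

/-- The vertex set of the subgraph `G_s^W`: all vertices `u` such that there is a
directed path `(v_0, …, v_ℓ)` with `v_0 = s`, `v_ℓ = u` and `{v_0, …, v_{ℓ-1}} ∩ W = ∅`. -/
def vertexSet {V : Type} (E : V → V → Prop) (s : V) (W : Set V) : Set V :=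
  {u | ∃ p : List V, p.Chain' E ∧ p.head? = some s ∧ p.getLast? = some u ∧
    ∀ x ∈ p.dropLast, x ∉ W}

/-- The weight of `u` in the subgraph of `G` induced on the vertex set `S`, with root `s`:
the number of directed paths from `s` to `u` all of whose vertices lie in `S`. -/
noncomputable def pathWtIn {V : Type} (E : V → V → Prop) (S : Set V) (s u : V) : ℕ :=
  Set.ncard {p : List V | p.Chain' E ∧ p.head? = some s ∧ p.getLast? = some u ∧
    ∀ x ∈ p, x ∈ S}

/-- The aggregate weight of the rooted DAG `G_s^W` (the induced subgraph of `G` on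
`vertexSet E s W`, rooted at `s`): the sum of the weights of its vertices.
(For `u` outside the vertex set the weight is `0`.) -/
noncomputable def awtSub {V : Type} [Fintype V] (E : V → V → Prop) (s : V) (W : Set V) : ℕ :=
  ∑ u : V, pathWtIn E (vertexSet E s W) s u

/-!
Walk down from `v`: as long as the current vertex `a` has an out-neighbour `b` with
`awt(G_v^b) ≤ m/2`, move to `b`. The walk may start at `v`, because `G_v^v` is the single
vertex `v`, of weight `1`, while `m ≥ 2` counts the trivial paths to `v` and to one of its
out-neighbours. Acyclicity makes the walk stop, and where it stops is a vertex as required;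
formally, take a minimal element of the admissible vertices for the descendant order.
-/

open Relation

section

variable {V : Type} {E : V → V → Prop}

theorem List.IsChain.nodup_of_acyclic (hacyc : ∀ x, ¬ TransGen E x x) {p : List V}
    (hp : p.IsChain E) : p.Nodup :=
  haveI : Std.Irrefl (TransGen E) := ⟨hacyc⟩
  (hp.imp fun _ _ => TransGen.single).pairwise.nodup

theorem wellFounded_transGen_swap_of_acyclic [Finite V] (hacyc : ∀ x, ¬ TransGen E x x) :
    WellFounded (TransGen (Function.swap E)) :=
  haveI : Std.Irrefl (TransGen (Function.swap E)) := ⟨fun x h => hacyc x (transGen_swap.mp h)⟩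
  Finite.wellFounded_of_trans_of_irrefl _

theorem one_le_pathWtIn [Fintype V] (hacyc : ∀ x, ¬ TransGen E x x) {S : Set V} {s u : V}
    {p : List V} (hp : p.IsChain E) (hs : p.head? = some s) (hu : p.getLast? = some u)
    (hS : ∀ x ∈ p, x ∈ S) : 1 ≤ pathWtIn E S s u := by
  have hfin : {q : List V | q.IsChain E ∧ q.head? = some s ∧ q.getLast? = some u ∧
      ∀ x ∈ q, x ∈ S}.Finite :=
    (List.finite_length_le V (Fintype.card V)).subset fun q hq =>
      (hq.1.nodup_of_acyclic hacyc).length_le_card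
  exact (Set.ncard_pos hfin).mpr ⟨p, hp, hs, hu, hS⟩

theorem self_mem_vertexSet (E : V → V → Prop) (s : V) (W : Set V) : s ∈ vertexSet E s W :=
  ⟨[s], List.isChain_singleton s, rfl, rfl, by simp⟩

theorem mem_vertexSet_of_rel {s a b : V} {W : Set V} (ha : a ∈ vertexSet E s W) (haW : a ∉ W)
    (hab : E a b) : b ∈ vertexSet E s W := by
  obtain ⟨p, hp, hs, hl, hW⟩ := ha
  have hne : p ≠ [] := by rintro rfl; simp at hs
  refine ⟨p ++ [b], ?_, by rwa [List.head?_append_of_ne_nil _ hne], by simp, ?_⟩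
  · refine List.isChain_append.mpr ⟨hp, List.isChain_singleton b, fun x hx y hy => ?_⟩
    rw [hl, Option.mem_some_iff] at hx
    rw [List.head?_singleton, Option.mem_some_iff] at hy
    exact hx ▸ hy ▸ hab
  · rw [List.dropLast_concat]
    intro x hx
    rw [← List.dropLast_concat_getLast hne, List.mem_append, List.mem_singleton] at hx
    rcases hx with hx | rfl
    · exact hW x hx
    · rwa [List.getLast_of_mem_getLast? hl]

theorem vertexSet_singleton_self (E : V → V → Prop) (s : V) : vertexSet E s {s} = {s} := by
  refine Set.eq_singleton_iff_unique_mem.mpr ⟨self_mem_vertexSet E s {s}, ?_⟩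
  rintro u ⟨p, -, hs, hu, hW⟩
  match p, hs with
  | [x], hs => simpa [← Option.some_injective _ hs] using hu.symm
  | x :: y :: t, hs => exact absurd (by simpa using hs) (hW x (by simp))

theorem pathWtIn_singleton_self [DecidableEq V] {s : V} (hs : ¬ E s s) (u : V) :
    pathWtIn E {s} s u = if u = s then 1 else 0 := by
  have only_trivial : ∀ p : List V, p.IsChain E → p.head? = some s →
      (∀ x ∈ p, x ∈ ({s} : Set V)) → p = [s] := by
    rintro (_ | ⟨x, _ | ⟨y, t⟩⟩) hp hh hS
    · simp at hh
    · simpa using hh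
    · have hx : x = s := hS x (by simp)
      have hy : y = s := hS y (by simp)
      subst hx hy
      exact absurd (List.isChain_cons_cons.mp hp).1 hs
  rw [pathWtIn]
  split_ifs with hu
  · subst hu
    convert Set.ncard_singleton [u] using 2
    ext p
    refine ⟨fun ⟨hp, hh, _, hS⟩ => only_trivial p hp hh hS, ?_⟩
    rintro rfl
    exact ⟨List.isChain_singleton u, rfl, rfl, by simp⟩
  · convert Set.ncard_empty (List V) using 2
    refine Set.eq_empty_of_forall_notMem fun p ⟨hp, hh, hl, hS⟩ => hu ?_
    rw [only_trivial p hp hh hS] at hl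
    exact (Option.some_injective _ hl).symm

theorem awtSub_singleton_self [Fintype V] {s : V} (hs : ¬ E s s) : awtSub E s {s} = 1 := by
  classical
  simp only [awtSub, vertexSet_singleton_self, pathWtIn_singleton_self hs,
    Finset.sum_ite_eq', Finset.mem_univ, if_true]

theorem two_le_awtSub_empty [Fintype V] (hacyc : ∀ x, ¬ TransGen E x x) {s w : V}
    (hsw : E s w) : 2 ≤ awtSub E s ∅ := by
  classical
  have hne : s ≠ w := by rintro rfl; exact hacyc s (.single hsw)
  have hs := self_mem_vertexSet E s ∅
  have hw := mem_vertexSet_of_rel hs (Set.notMem_empty s) hsw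
  have h_s : 1 ≤ pathWtIn E (vertexSet E s ∅) s s :=
    one_le_pathWtIn hacyc (List.isChain_singleton s) rfl rfl (by simpa)
  have h_w : 1 ≤ pathWtIn E (vertexSet E s ∅) s w :=
    one_le_pathWtIn hacyc (List.isChain_pair.mpr hsw) rfl rfl (by simp [hs, hw])
  calc 2 ≤ ∑ u ∈ {s, w}, pathWtIn E (vertexSet E s ∅) s u := by
        rw [Finset.sum_pair hne]; omega
    _ ≤ awtSub E s ∅ := Finset.sum_le_sum_of_subset (Finset.subset_univ _)

end

theorem stmt5_general {V : Type} [Fintype V] (E : V → V → Prop)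
    (hacyc : ∀ x : V, ¬ Relation.TransGen E x x)
    (v : V) (hv : ∃ w, E v w) :
    ∃ a ∈ vertexSet E v ∅,
      2 * awtSub E v {a} ≤ awtSub E v ∅ ∧
      ∀ b : V, E a b → 2 * awtSub E v {b} > awtSub E v ∅ := by
  obtain ⟨w, hvw⟩ := hv
  let admissible := {a | a ∈ vertexSet E v ∅ ∧ 2 * awtSub E v {a} ≤ awtSub E v ∅}
  have hv_admissible : v ∈ admissible := by
    refine ⟨self_mem_vertexSet E v ∅, ?_⟩
    rw [awtSub_singleton_self fun h => hacyc v (.single h)]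
    linarith [two_le_awtSub_empty hacyc hvw]
  obtain ⟨a, ⟨ha, ha_half⟩, ha_min⟩ :=
    (wellFounded_transGen_swap_of_acyclic hacyc).has_min admissible ⟨v, hv_admissible⟩
  refine ⟨a, ha, ha_half, fun b hab => ?_⟩
  by_contra! hb
  exact ha_min b ⟨mem_vertexSet_of_rel ha (Set.notMem_empty a) hab, hb⟩ (.single hab)

/-- in a finite rooted DAG `G` with root `r`, for every non-leaf vertex `v`,
with `m := awt(G_v)`, there is a vertex `a ∈ V(G_v)` such that `awt(G_v^a) ≤ m/2` and
`awt(G_v^b) > m/2` for every out-neighbour `b` of `a`. -/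
theorem stmt5 {V : Type} [Fintype V] (E : V → V → Prop) (r : V)
    (hacyc : ∀ x : V, ¬ Relation.TransGen E x x)
    (hroot : ∀ x : V, Relation.ReflTransGen E r x)
    (v : V) (hv : ∃ w, E v w) :
    ∃ a ∈ vertexSet E v ∅,
      2 * awtSub E v {a} ≤ awtSub E v ∅ ∧
      ∀ b : V, E a b → 2 * awtSub E v {b} > awtSub E v ∅ :=
  stmt5_general E hacyc v hv
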